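/- arXiv:2601.01189 — 4 statements merged into one kernel-verified Lean document; each statement's English description precedes it below -/
import Mathlib

section
/- Let X_1, X_2, ... be i.i.d. nonnegative random variables with density Λ^{-1}φ where φ : [0,∞) → [0,∞) satisfies Λ = ∫_0^∞ φ(s) ds < ∞ and ∫_0^∞ s^q φ(s) ds < ∞ for some q ≥ 1. Then for all n ≥ 1 and r ≥ 1, ∫_r^∞ √s · φ^{*n}(s) ds ≤ C Λ^n n^q r^{1/2 - q}, where φ^{*n} denotes the n-fold convolution of φ and C depends only on φ and q. -/
open MeasureTheory

/-- Convolution f*g(t) = ∫_0^t f(t−s) g(s) ds (vanishing for t ≤ 0). -/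
noncomputable def conv (f g : ℝ → ℝ) (t : ℝ) : ℝ :=
  ∫ s in Set.Ioc 0 t, f (t - s) * g s

/-- n-fold convolution φ^{*n} of φ (for n ≥ 1; the value at n = 0 is irrelevant here). -/
noncomputable def convIter (φ : ℝ → ℝ) : ℕ → ℝ → ℝ
  | 0 => fun _ => 0
  | 1 => φ
  | n + 2 => conv φ (convIter φ (n + 1))

/-!
For the moments `M_p(f) = ∫₀^∞ s ^ p f(s) ds`, Tonelli and the convexity bound
`(u + s) ^ q ≤ a ^ (1 - q) u ^ q + b ^ (1 - q) s ^ q` (`a + b = 1`, `q ≥ 1`) give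
`M_q(φ * g) ≤ a ^ (1 - q) M_q(φ) M_0(g) + b ^ (1 - q) M_0(φ) M_q(g)`. Taking `a = 1 / (n + 1)`
this yields by induction `M_q(φ^{*n}) ≤ n ^ q M_q(φ) Λ ^ (n - 1)`, i.e.
`E[S_n ^ q] ≤ n ^ q E[X ^ q]`, and the tail bound follows from `√s ≤ r ^ (1/2 - q) s ^ q`
for `s ≥ r`.
-/

open Set
open scoped ENNReal
open ENNReal (ofReal)

lemma add_rpow_le_of_add_eq_one {u s a b q : ℝ} (hu : 0 ≤ u) (hs : 0 ≤ s) (ha : 0 < a)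
    (hb : 0 < b) (hab : a + b = 1) (hq : 1 ≤ q) :
    (u + s) ^ q ≤ a ^ (1 - q) * u ^ q + b ^ (1 - q) * s ^ q := by
  have hconvex := (convexOn_rpow hq).2 (mem_Ici.2 (div_nonneg hu ha.le))
    (mem_Ici.2 (div_nonneg hs hb.le)) ha.le hb.le hab
  simp only [smul_eq_mul, mul_div_cancel₀ _ ha.ne', mul_div_cancel₀ _ hb.ne'] at hconvex
  calc (u + s) ^ q ≤ a * (u / a) ^ q + b * (s / b) ^ q := hconvex
    _ = a ^ (1 - q) * u ^ q + b ^ (1 - q) * s ^ q := by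
        rw [Real.div_rpow hu ha.le, Real.div_rpow hs hb.le, Real.rpow_sub ha,
          Real.rpow_sub hb, Real.rpow_one, Real.rpow_one]
        field_simp

lemma one_div_rpow_add_div_rpow_mul_rpow {x : ℝ} (hx : 0 < x) (q : ℝ) :
    (1 / (x + 1)) ^ (1 - q) + (x / (x + 1)) ^ (1 - q) * x ^ q = (x + 1) ^ q := by
  have hx1 : 0 < x + 1 := by linarith
  rw [Real.div_rpow zero_le_one hx1.le, Real.div_rpow hx.le hx1.le, Real.one_rpow,
    Real.rpow_sub hx1, Real.rpow_sub hx, Real.rpow_one, Real.rpow_one]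
  field_simp
  ring

lemma ofReal_integral_le_lintegral_ofReal {α : Type*} [MeasurableSpace α] {μ : Measure α}
    {h : α → ℝ} (h0 : ∀ x, 0 ≤ h x) :
    ofReal (∫ x, h x ∂μ) ≤ ∫⁻ x, ofReal (h x) ∂μ :=
  calc ofReal (∫ x, h x ∂μ) ≤ ‖∫ x, h x ∂μ‖ₑ := Real.ofReal_le_enorm _
    _ ≤ ∫⁻ x, ‖h x‖ₑ ∂μ := enorm_integral_le_lintegral_enorm _
    _ = ∫⁻ x, ofReal (h x) ∂μ := lintegral_congr fun x => Real.enorm_of_nonneg (h0 x)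

lemma measurableSet_setOf_snd_mem_Ioc : MeasurableSet {p : ℝ × ℝ | p.2 ∈ Ioc 0 p.1} :=
  (measurableSet_lt measurable_const measurable_snd).inter
    (measurableSet_le measurable_snd measurable_fst)

-- `M_q(f)` as a lower integral, so that the moments of `φ^{*n}` can be bounded before their
-- finiteness is known.
noncomputable def lmoment (q : ℝ) (f : ℝ → ℝ) : ℝ≥0∞ :=
  ∫⁻ s in Ioi 0, ofReal (s ^ q) * ofReal (f s)

section Convolution

variable {f g : ℝ → ℝ}

lemma measurable_conv (hf : Measurable f) (hg : Measurable g) : Measurable (conv f g) := by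
  have hF : Measurable
      ({p : ℝ × ℝ | p.2 ∈ Ioc 0 p.1}.indicator fun p => f (p.1 - p.2) * g p.2) :=
    (by fun_prop : Measurable fun p : ℝ × ℝ => f (p.1 - p.2) * g p.2).indicator
      measurableSet_setOf_snd_mem_Ioc
  have : conv f g = fun t => ∫ s, {p : ℝ × ℝ | p.2 ∈ Ioc 0 p.1}.indicator
      (fun p => f (p.1 - p.2) * g p.2) (t, s) := by
    funext t
    rw [conv, ← integral_indicator measurableSet_Ioc]
    rfl
  rw [this]
  exact hF.stronglyMeasurable.integral_prod_right'.measurable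

lemma conv_nonneg (hf : ∀ s, 0 ≤ f s) (hg : ∀ s, 0 ≤ g s) (t : ℝ) : 0 ≤ conv f g t :=
  setIntegral_nonneg measurableSet_Ioc fun s _ => mul_nonneg (hf (t - s)) (hg s)

lemma setLIntegral_mul_conv_le (w : ℝ → ℝ≥0∞) (hw : Measurable w) (hf : Measurable f)
    (hf0 : ∀ s, 0 ≤ f s) (hg : Measurable g) (hg0 : ∀ s, 0 ≤ g s) :
    ∫⁻ t in Ioi 0, w t * ofReal (conv f g t) ≤
      ∫⁻ s in Ioi 0, ofReal (g s) * ∫⁻ u in Ioi 0, w (u + s) * ofReal (f u) := by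
  set D := {p : ℝ × ℝ | p.2 ∈ Ioc 0 p.1}
  set F : ℝ × ℝ → ℝ≥0∞ := fun p => w p.1 * (ofReal (f (p.1 - p.2)) * ofReal (g p.2))
  have hF : Measurable (D.indicator F) :=
    (by fun_prop : Measurable F).indicator measurableSet_setOf_snd_mem_Ioc
  have hconv (t : ℝ) : w t * ofReal (conv f g t) ≤ ∫⁻ s, D.indicator F (t, s) :=
    calc w t * ofReal (conv f g t)
        ≤ w t * ∫⁻ s in Ioc 0 t, ofReal (f (t - s) * g s) := by
          gcongr
          exact ofReal_integral_le_lintegral_ofReal fun s => mul_nonneg (hf0 _) (hg0 _)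
      _ = ∫⁻ s in Ioc 0 t, F (t, s) := by
          rw [← lintegral_const_mul _ (by fun_prop)]
          simp only [F, ENNReal.ofReal_mul (hf0 _)]
      _ = ∫⁻ s, D.indicator F (t, s) := (lintegral_indicator measurableSet_Ioc _).symm
  have hshear (s : ℝ) : ∫⁻ u, D.indicator F (u + s, s) =
      (Ioi 0).indicator (fun s => ofReal (g s) *
        ∫⁻ u in Ici 0, w (u + s) * ofReal (f u)) s := by
    by_cases hs : 0 < s
    · rw [indicator_of_mem (mem_Ioi.2 hs), ← lintegral_const_mul _ (by fun_prop),
        ← lintegral_indicator measurableSet_Ici]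
      refine lintegral_congr fun u => ?_
      by_cases hu : 0 ≤ u
      · rw [indicator_of_mem (show (u + s, s) ∈ D from ⟨hs, by linarith⟩),
          indicator_of_mem (mem_Ici.2 hu)]
        simp only [F, add_sub_cancel_right]
        ring
      · rw [indicator_of_notMem (show (u + s, s) ∉ D from fun h => hu (by linarith [h.2])),
          indicator_of_notMem (fun h => hu (mem_Ici.1 h))]
    · rw [indicator_of_notMem (fun h => hs (mem_Ioi.1 h))]
      refine (lintegral_congr fun u => ?_).trans lintegral_zero
      exact indicator_of_notMem (fun h => hs h.1) _
  calc ∫⁻ t in Ioi 0, w t * ofReal (conv f g t)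
      ≤ ∫⁻ t, ∫⁻ s, D.indicator F (t, s) :=
        (setLIntegral_le_lintegral _ _).trans (lintegral_mono hconv)
    _ = ∫⁻ p, D.indicator F p := by
        rw [Measure.volume_eq_prod, lintegral_prod _ hF.aemeasurable]
    _ = ∫⁻ p : ℝ × ℝ, D.indicator F (p.1 + p.2, p.2) := by
        rw [Measure.volume_eq_prod, (measurePreserving_add_prod volume volume).lintegral_comp hF]
    _ = ∫⁻ s, ∫⁻ u, D.indicator F (u + s, s) := by
        rw [Measure.volume_eq_prod]
        exact lintegral_prod_symm _ (hF.comp (by fun_prop)).aemeasurable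
    _ = _ := by
        simp_rw [hshear, lintegral_indicator measurableSet_Ioi,
          setLIntegral_congr (Ioi_ae_eq_Ici (a := (0:ℝ))).symm]

lemma lmoment_eq_ofReal_integral {q : ℝ} (hf0 : ∀ s, 0 ≤ f s)
    (hf : IntegrableOn (fun s => s ^ q * f s) (Ioi 0)) :
    lmoment q f = ofReal (∫ s in Ioi 0, s ^ q * f s) := by
  rw [ofReal_integral_eq_lintegral_ofReal hf
    ((ae_restrict_mem measurableSet_Ioi).mono fun s hs =>
      mul_nonneg (Real.rpow_nonneg hs.le q) (hf0 s))]
  exact setLIntegral_congr_fun measurableSet_Ioi fun s hs =>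
    (ENNReal.ofReal_mul (Real.rpow_nonneg hs.le q)).symm

lemma lmoment_zero_conv_le (hf : Measurable f) (hf0 : ∀ s, 0 ≤ f s) (hg : Measurable g)
    (hg0 : ∀ s, 0 ≤ g s) : lmoment 0 (conv f g) ≤ lmoment 0 f * lmoment 0 g := by
  have h := setLIntegral_mul_conv_le (fun t => ofReal (t ^ (0:ℝ))) (by fun_prop) hf hf0 hg hg0
  simp only [Real.rpow_zero, ENNReal.ofReal_one, one_mul] at h
  rw [lintegral_mul_const _ (by fun_prop)] at h
  simp only [lmoment, Real.rpow_zero, ENNReal.ofReal_one, one_mul]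
  rwa [mul_comm]

lemma setLIntegral_add_rpow_mul_le {q a b s : ℝ} (hq : 1 ≤ q) (ha : 0 < a) (hb : 0 < b)
    (hab : a + b = 1) (hs : 0 ≤ s) (hf : Measurable f) :
    ∫⁻ u in Ioi 0, ofReal ((u + s) ^ q) * ofReal (f u) ≤
      ofReal (a ^ (1 - q)) * lmoment q f +
        ofReal (b ^ (1 - q)) * ofReal (s ^ q) * lmoment 0 f := by
  have hpoint (u : ℝ) (hu : 0 ≤ u) : ofReal ((u + s) ^ q) ≤
      ofReal (a ^ (1 - q)) * ofReal (u ^ q) +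
        ofReal (b ^ (1 - q)) * ofReal (s ^ q) := by
    rw [← ENNReal.ofReal_mul (by positivity), ← ENNReal.ofReal_mul (by positivity),
      ← ENNReal.ofReal_add (by positivity) (by positivity)]
    exact ENNReal.ofReal_le_ofReal (add_rpow_le_of_add_eq_one hu hs ha hb hab hq)
  calc ∫⁻ u in Ioi 0, ofReal ((u + s) ^ q) * ofReal (f u)
      ≤ ∫⁻ u in Ioi 0, (ofReal (a ^ (1 - q)) * (ofReal (u ^ q) * ofReal (f u))
          + ofReal (b ^ (1 - q)) * ofReal (s ^ q) * ofReal (f u)) :=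
        setLIntegral_mono' measurableSet_Ioi fun u hu => by
          grw [hpoint u hu.le]
          rw [add_mul, mul_assoc]
    _ = _ := by
        rw [lintegral_add_left (by fun_prop), lintegral_const_mul _ (by fun_prop),
          lintegral_const_mul _ (by fun_prop)]
        simp only [lmoment, Real.rpow_zero, ENNReal.ofReal_one, one_mul]

lemma lmoment_conv_le {q a b : ℝ} (hq : 1 ≤ q) (ha : 0 < a) (hb : 0 < b) (hab : a + b = 1)
    (hf : Measurable f) (hf0 : ∀ s, 0 ≤ f s) (hg : Measurable g) (hg0 : ∀ s, 0 ≤ g s) :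
    lmoment q (conv f g) ≤ ofReal (a ^ (1 - q)) * lmoment q f * lmoment 0 g +
      ofReal (b ^ (1 - q)) * lmoment 0 f * lmoment q g := by
  calc lmoment q (conv f g)
      ≤ ∫⁻ s in Ioi 0, ofReal (g s) *
          ∫⁻ u in Ioi 0, ofReal ((u + s) ^ q) * ofReal (f u) :=
        setLIntegral_mul_conv_le _ (by fun_prop) hf hf0 hg hg0
    _ ≤ ∫⁻ s in Ioi 0, ofReal (g s) * (ofReal (a ^ (1 - q)) * lmoment q f +
          ofReal (b ^ (1 - q)) * ofReal (s ^ q) * lmoment 0 f) :=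
        setLIntegral_mono' measurableSet_Ioi fun s hs =>
          mul_le_mul_right (setLIntegral_add_rpow_mul_le hq ha hb hab hs.le hf) _
    _ = ∫⁻ s in Ioi 0, (ofReal (g s) * (ofReal (a ^ (1 - q)) * lmoment q f) +
          ofReal (b ^ (1 - q)) * lmoment 0 f *
            (ofReal (s ^ q) * ofReal (g s))) := by
        congr 1
        ext s
        ring
    _ = _ := by
        rw [lintegral_add_left (by fun_prop), lintegral_mul_const _ (by fun_prop),
          lintegral_const_mul _ (by fun_prop)]
        simp only [lmoment, Real.rpow_zero, ENNReal.ofReal_one, one_mul]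
        ring

lemma setLIntegral_Ioi_rpow_mul_le_lmoment {p q r : ℝ} (hr : 0 < r) (hpq : p ≤ q) :
    ∫⁻ s in Ioi r, ofReal (s ^ p) * ofReal (f s) ≤
      ofReal (r ^ (p - q)) * lmoment q f := by
  have hpoint (s : ℝ) (hs : r < s) :
      ofReal (s ^ p) ≤ ofReal (r ^ (p - q)) * ofReal (s ^ q) := by
    have hs0 : 0 < s := hr.trans hs
    rw [← ENNReal.ofReal_mul (by positivity)]
    refine ENNReal.ofReal_le_ofReal ?_
    calc s ^ p = s ^ (p - q) * s ^ q := by rw [← Real.rpow_add hs0, sub_add_cancel]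
      _ ≤ r ^ (p - q) * s ^ q := mul_le_mul_of_nonneg_right
        (Real.rpow_le_rpow_of_nonpos hr hs.le (sub_nonpos.2 hpq)) (by positivity)
  calc ∫⁻ s in Ioi r, ofReal (s ^ p) * ofReal (f s)
      ≤ ∫⁻ s in Ioi r, ofReal (r ^ (p - q)) * (ofReal (s ^ q) * ofReal (f s)) :=
        setLIntegral_mono' measurableSet_Ioi fun s hs => by grw [hpoint s hs, mul_assoc]
    _ ≤ ofReal (r ^ (p - q)) * lmoment q f := by
        rw [lintegral_const_mul' _ _ ENNReal.ofReal_ne_top]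
        gcongr
        exact lintegral_mono_set (Ioi_subset_Ioi hr.le)

end Convolution

section ConvIter

variable {φ : ℝ → ℝ}

lemma measurable_convIter (hφ : Measurable φ) : ∀ n, Measurable (convIter φ n)
  | 0 => measurable_const
  | 1 => hφ
  | n + 2 => measurable_conv hφ (measurable_convIter hφ (n + 1))

lemma convIter_nonneg (hφ0 : ∀ s, 0 ≤ φ s) : ∀ n s, 0 ≤ convIter φ n s
  | 0, _ => le_rfl
  | 1, s => hφ0 s
  | n + 2, s => conv_nonneg hφ0 (convIter_nonneg hφ0 (n + 1)) s

lemma lmoment_zero_convIter_le (hφ : Measurable φ) (hφ0 : ∀ s, 0 ≤ φ s) :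
    ∀ n, lmoment 0 (convIter φ (n + 1)) ≤ lmoment 0 φ ^ (n + 1)
  | 0 => by rw [zero_add, pow_one]; rfl
  | n + 1 =>
    calc lmoment 0 (conv φ (convIter φ (n + 1)))
        ≤ lmoment 0 φ * lmoment 0 (convIter φ (n + 1)) :=
          lmoment_zero_conv_le hφ hφ0 (measurable_convIter hφ _) (convIter_nonneg hφ0 _)
      _ ≤ lmoment 0 φ * lmoment 0 φ ^ (n + 1) := by
          gcongr
          exact lmoment_zero_convIter_le hφ hφ0 n
      _ = lmoment 0 φ ^ (n + 1 + 1) := (pow_succ' _ _).symm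

lemma lmoment_convIter_le {q : ℝ} (hq : 1 ≤ q) (hφ : Measurable φ)
    (hφ0 : ∀ s, 0 ≤ φ s) :
    ∀ n : ℕ, lmoment q (convIter φ (n + 1)) ≤
      ofReal (((n : ℝ) + 1) ^ q) * lmoment q φ * lmoment 0 φ ^ n
  | 0 => by
    simp only [Nat.cast_zero, zero_add, Real.one_rpow, ENNReal.ofReal_one, one_mul, pow_zero,
      mul_one]
    rfl
  | n + 1 => by
    set x : ℝ := (n : ℝ) + 1
    have hx : 0 < x := by positivity
    have hweights : 1 / (x + 1) + x / (x + 1) = 1 := by field_simp; ring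
    calc lmoment q (conv φ (convIter φ (n + 1)))
        ≤ ofReal ((1 / (x + 1)) ^ (1 - q)) * lmoment q φ * lmoment 0 (convIter φ (n + 1)) +
          ofReal ((x / (x + 1)) ^ (1 - q)) * lmoment 0 φ * lmoment q (convIter φ (n + 1)) :=
          lmoment_conv_le hq (by positivity) (by positivity) hweights hφ hφ0
            (measurable_convIter hφ _) (convIter_nonneg hφ0 _)
      _ ≤ ofReal ((1 / (x + 1)) ^ (1 - q)) * lmoment q φ * lmoment 0 φ ^ (n + 1) +
          ofReal ((x / (x + 1)) ^ (1 - q)) * lmoment 0 φ *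
            (ofReal (x ^ q) * lmoment q φ * lmoment 0 φ ^ n) := by
          gcongr
          · exact lmoment_zero_convIter_le hφ hφ0 n
          · exact lmoment_convIter_le hq hφ hφ0 n
      _ = ofReal ((1 / (x + 1)) ^ (1 - q) + (x / (x + 1)) ^ (1 - q) * x ^ q) *
            lmoment q φ * lmoment 0 φ ^ (n + 1) := by
          rw [ENNReal.ofReal_add (by positivity) (by positivity),
            ENNReal.ofReal_mul (by positivity)]
          ring
      _ = ofReal ((((n + 1 : ℕ) : ℝ) + 1) ^ q) * lmoment q φ * lmoment 0 φ ^ (n + 1) := by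
          rw [one_div_rpow_add_div_rpow_mul_rpow hx]
          push_cast
          rfl

lemma setIntegral_Ioi_sqrt_mul_convIter_le {q r Λ M : ℝ} (hq : 1 ≤ q) (hφ : Measurable φ)
    (hφ0 : ∀ s, 0 ≤ φ s) (hr : 0 < r) (hΛ : 0 ≤ Λ) (hM : 0 ≤ M)
    (hmass : lmoment 0 φ = ofReal Λ) (hmoment : lmoment q φ = ofReal M) (m : ℕ) :
    ∫ s in Ioi r, √s * convIter φ (m + 1) s ≤
      M * Λ ^ m * (((m : ℝ) + 1) ^ q * r ^ ((1:ℝ) / 2 - q)) := by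
  refine (ENNReal.ofReal_le_ofReal_iff (by positivity)).1 <|
    (ofReal_integral_le_lintegral_ofReal fun s =>
      mul_nonneg (Real.sqrt_nonneg s) (convIter_nonneg hφ0 _ s)).trans ?_
  calc ∫⁻ s in Ioi r, ofReal (√s * convIter φ (m + 1) s)
      = ∫⁻ s in Ioi r, ofReal (s ^ ((1:ℝ) / 2)) * ofReal (convIter φ (m + 1) s) := by
        refine lintegral_congr fun s => ?_
        rw [ENNReal.ofReal_mul (Real.sqrt_nonneg s), Real.sqrt_eq_rpow]
    _ ≤ ofReal (r ^ ((1:ℝ) / 2 - q)) * lmoment q (convIter φ (m + 1)) :=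
        setLIntegral_Ioi_rpow_mul_le_lmoment hr (by linarith)
    _ ≤ ofReal (r ^ ((1:ℝ) / 2 - q)) *
          (ofReal (((m : ℝ) + 1) ^ q) * ofReal M * ofReal Λ ^ m) := by
        rw [← hmass, ← hmoment]
        gcongr
        exact lmoment_convIter_le hq hφ hφ0 m
    _ = ofReal (M * Λ ^ m * (((m : ℝ) + 1) ^ q * r ^ ((1:ℝ) / 2 - q))) := by
        rw [← ENNReal.ofReal_pow hΛ, ← ENNReal.ofReal_mul (by positivity),
          ← ENNReal.ofReal_mul (by positivity), ← ENNReal.ofReal_mul (by positivity)]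
        ring_nf

end ConvIter

theorem stmt1_general (φ : ℝ → ℝ) (q : ℝ) (hq : 1 ≤ q)
    (hφmeas : Measurable φ) (hφnn : ∀ s, 0 ≤ φ s)
    (hΛpos : 0 < ∫ s in Set.Ioi (0:ℝ), φ s)
    (hΛint : IntegrableOn φ (Set.Ioi 0))
    (hmom : IntegrableOn (fun s => s ^ q * φ s) (Set.Ioi 0)) :
    ∃ C > 0, ∀ n : ℕ, 1 ≤ n → ∀ r : ℝ, 1 ≤ r →
      ∫ s in Set.Ioi r, Real.sqrt s * convIter φ n s ≤
        C * (∫ s in Set.Ioi (0:ℝ), φ s) ^ n * (n : ℝ) ^ q * r ^ ((1:ℝ) / 2 - q) := by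
  set Λ := ∫ s in Ioi (0:ℝ), φ s
  set M := ∫ s in Ioi (0:ℝ), s ^ q * φ s
  have hM : 0 ≤ M := setIntegral_nonneg measurableSet_Ioi fun s hs =>
    mul_nonneg (Real.rpow_nonneg hs.le q) (hφnn s)
  have hmass : lmoment 0 φ = ofReal Λ := by
    simpa using lmoment_eq_ofReal_integral (q := 0) hφnn (by simpa using hΛint)
  have hmoment : lmoment q φ = ofReal M := lmoment_eq_ofReal_integral hφnn hmom
  refine ⟨M / Λ + 1, by positivity, fun n hn r hr => ?_⟩
  obtain ⟨m, rfl⟩ := Nat.exists_eq_add_of_le' hn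
  have hC : M * Λ ^ m ≤ (M / Λ + 1) * Λ ^ (m + 1) :=
    calc M * Λ ^ m ≤ M * Λ ^ m + Λ ^ (m + 1) := le_add_of_nonneg_right (by positivity)
      _ = (M / Λ + 1) * Λ ^ (m + 1) := by field_simp; ring
  calc ∫ s in Ioi r, √s * convIter φ (m + 1) s
      ≤ M * Λ ^ m * (((m : ℝ) + 1) ^ q * r ^ ((1:ℝ) / 2 - q)) :=
        setIntegral_Ioi_sqrt_mul_convIter_le hq hφmeas hφnn (by linarith) hΛpos.le hM hmass
          hmoment m
    _ ≤ (M / Λ + 1) * Λ ^ (m + 1) * (((m : ℝ) + 1) ^ q * r ^ ((1:ℝ) / 2 - q)) := by gcongr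
    _ = _ := by push_cast; ring

/-- If Λ = ∫_0^∞ φ < ∞ and ∫_0^∞ s^q φ(s) ds < ∞ for some q ≥ 1, then there exists a
constant C (depending only on φ and q) such that for all n ≥ 1 and r ≥ 1,
∫_r^∞ √s φ^{*n}(s) ds ≤ C Λ^n n^q r^{1/2−q}. -/
theorem stmt1 (φ : ℝ → ℝ) (q : ℝ) (hq : 1 ≤ q)
    (hφmeas : Measurable φ) (hφnn : ∀ s, 0 ≤ φ s) (hφ0 : ∀ s < (0:ℝ), φ s = 0)
    (hΛpos : 0 < ∫ s in Set.Ioi (0:ℝ), φ s)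
    (hΛint : IntegrableOn φ (Set.Ioi 0))
    (hmom : IntegrableOn (fun s => s ^ q * φ s) (Set.Ioi 0)) :
    ∃ C > 0, ∀ n : ℕ, 1 ≤ n → ∀ r : ℝ, 1 ≤ r →
      ∫ s in Set.Ioi r, Real.sqrt s * convIter φ n s ≤
        C * (∫ s in Set.Ioi (0:ℝ), φ s) ^ n * (n : ℝ) ^ q * r ^ ((1:ℝ) / 2 - q) :=
  stmt1_general φ q hq hφmeas hφnn hΛpos hΛint hmom
end

section
/- Let φ : [0,∞) → [0,∞) with Λ = ∫_0^∞ φ(s) ds < ∞, extended by φ(u) = 0 for u < 0. Then for every n ≥ 1 and all 0 ≤ s ≤ t: ∫_0^t √u (φ^{*n}(t−u) − φ^{*n}(s−u)) du ≤ 2 Λ^n √(t−s). -/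
open MeasureTheory

section
open Set

lemma sqrt_sub_sqrt_le (a b : ℝ) (hb : 0 ≤ b) (hab : b ≤ a) :
    Real.sqrt a - Real.sqrt b ≤ Real.sqrt (a - b) := by
  have h : Real.sqrt a ≤ Real.sqrt (a - b) + Real.sqrt b := by
    rw [← Real.sqrt_sq (by positivity : (0:ℝ) ≤ Real.sqrt (a - b) + Real.sqrt b)]
    apply Real.sqrt_le_sqrt
    have h1 := Real.sq_sqrt (by linarith : (0:ℝ) ≤ a - b)
    have h2 := Real.sq_sqrt hb
    have h3 := Real.sqrt_nonneg (a - b)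
    have h4 := Real.sqrt_nonneg b
    nlinarith
  linarith

lemma ae_eq_indicator_of_neg_zero (ψ : ℝ → ℝ) (h0 : ∀ u < (0:ℝ), ψ u = 0) :
    ψ =ᵐ[volume] Set.indicator (Set.Ioi 0) ψ := by
  filter_upwards [compl_mem_ae_iff.mpr (measure_singleton (0:ℝ))] with u hu
  simp only [Set.mem_compl_iff, Set.mem_singleton_iff] at hu
  rcases lt_or_gt_of_ne hu with h | h
  · rw [h0 u h, Set.indicator_of_notMem (by simp [Set.mem_Ioi]; linarith)]
  · rw [Set.indicator_of_mem (Set.mem_Ioi.2 h)]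

lemma integrable_of_neg_zero (ψ : ℝ → ℝ) (h0 : ∀ u < (0:ℝ), ψ u = 0)
    (hint : IntegrableOn ψ (Set.Ioi 0)) : Integrable ψ :=
  ((integrable_indicator_iff measurableSet_Ioi).2 hint).congr
    (ae_eq_indicator_of_neg_zero ψ h0).symm

lemma integral_eq_of_neg_zero (ψ : ℝ → ℝ) (h0 : ∀ u < (0:ℝ), ψ u = 0) :
    ∫ u, ψ u = ∫ u in Set.Ioi 0, ψ u := by
  rw [integral_congr_ae (ae_eq_indicator_of_neg_zero ψ h0), integral_indicator measurableSet_Ioi]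

lemma conv_eq (φ ψ : ℝ → ℝ) (hφ0 : ∀ u < (0:ℝ), φ u = 0) (hψ0 : ∀ u < (0:ℝ), ψ u = 0)
    (t : ℝ) : conv φ ψ t = ∫ s, φ (t - s) * ψ s := by
  unfold conv
  rw [← integral_indicator measurableSet_Ioc]
  apply integral_congr_ae
  filter_upwards [compl_mem_ae_iff.mpr (measure_singleton (0:ℝ))] with u hu
  simp only [Set.mem_compl_iff, Set.mem_singleton_iff] at hu
  by_cases h : u ∈ Set.Ioc 0 t
  · rw [Set.indicator_of_mem h]
  · rw [Set.indicator_of_notMem h]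
    simp only [Set.mem_Ioc, not_and_or, not_lt, not_le] at h
    rcases h with h | h
    · rw [hψ0 u (lt_of_le_of_ne h hu), mul_zero]
    · rw [hφ0 (t - u) (by linarith), zero_mul]

lemma convIter_succ (φ : ℝ → ℝ) (n : ℕ) (hn : 1 ≤ n) :
    convIter φ (n + 1) = conv φ (convIter φ n) := by
  cases n with
  | zero => omega
  | succ m => rfl

lemma conv_props (φ ψ : ℝ → ℝ) (hφm : Measurable φ) (hφnn : ∀ u, 0 ≤ φ u)
    (hφ0 : ∀ u < (0:ℝ), φ u = 0) (hφint : Integrable φ)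
    (hψm : Measurable ψ) (hψnn : ∀ u, 0 ≤ ψ u) (hψ0 : ∀ u < (0:ℝ), ψ u = 0)
    (hψint : Integrable ψ) :
    Measurable (conv φ ψ) ∧ (∀ u, 0 ≤ conv φ ψ u) ∧ (∀ u < (0:ℝ), conv φ ψ u = 0) ∧
      Integrable (conv φ ψ) ∧ ∫ u, conv φ ψ u = (∫ u, φ u) * ∫ u, ψ u := by
  have hFm : Measurable (fun p : ℝ × ℝ => φ (p.1 - p.2) * ψ p.2) :=
    (hφm.comp (measurable_fst.sub measurable_snd)).mul (hψm.comp measurable_snd)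
  have hFint : Integrable (fun p : ℝ × ℝ => φ (p.1 - p.2) * ψ p.2)
      (volume.prod volume) := by
    refine (integrable_prod_iff' hFm.aestronglyMeasurable).2 ⟨?_, ?_⟩
    · filter_upwards with s
      exact (hφint.comp_sub_right s).mul_const (ψ s)
    · have heq : ∀ s : ℝ, (∫ t, |φ (t - s)| * |ψ s|) = (∫ t, |φ t|) * |ψ s| := by
        intro s
        rw [integral_mul_const, integral_sub_right_eq_self (fun t => |φ t|) s]
      simp_rw [norm_mul, Real.norm_eq_abs, heq]
      simpa [Real.norm_eq_abs] using hψint.norm.const_mul (∫ t, |φ t|)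
  have hconv : conv φ ψ = fun t => ∫ s, φ (t - s) * ψ s :=
    funext (conv_eq φ ψ hφ0 hψ0)
  refine ⟨?_, ?_, ?_, ?_, ?_⟩
  · rw [hconv]
    exact (hFm.stronglyMeasurable.integral_prod_right').measurable
  · intro u
    exact integral_nonneg fun s => mul_nonneg (hφnn _) (hψnn _)
  · intro u hu
    unfold conv
    rw [Set.Ioc_eq_empty (by linarith)]
    simp
  · rw [hconv]
    exact hFint.integral_prod_left
  · rw [hconv]
    rw [MeasureTheory.integral_integral_swap (f := fun t s => φ (t - s) * ψ s) hFint]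
    have : ∀ s : ℝ, (∫ t, φ (t - s) * ψ s) = (∫ u, φ u) * ψ s := by
      intro s
      rw [integral_mul_const, integral_sub_right_eq_self φ s]
    simp_rw [this]
    rw [integral_const_mul]
lemma convIter_props (φ : ℝ → ℝ) (hφm : Measurable φ) (hφnn : ∀ u, 0 ≤ φ u)
    (hφ0 : ∀ u < (0:ℝ), φ u = 0) (hφint : Integrable φ) :
    ∀ n : ℕ, 1 ≤ n → Measurable (convIter φ n) ∧ (∀ u, 0 ≤ convIter φ n u) ∧
      (∀ u < (0:ℝ), convIter φ n u = 0) ∧ Integrable (convIter φ n) ∧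
      ∫ u, convIter φ n u = (∫ u, φ u) ^ n := by
  intro n hn
  induction n, hn using Nat.le_induction with
  | base => exact ⟨hφm, hφnn, hφ0, hφint, by rw [show convIter φ 1 = φ from rfl]; simp⟩
  | succ n hn ih =>
    obtain ⟨h1, h2, h3, h4, h5⟩ := ih
    rw [convIter_succ φ n hn]
    obtain ⟨g1, g2, g3, g4, g5⟩ :=
      conv_props φ (convIter φ n) hφm hφnn hφ0 hφint h1 h2 h3 h4
    exact ⟨g1, g2, g3, g4, by rw [g5, h5, pow_succ]; ring⟩
end

/-- If φ ≥ 0 vanishes on negatives with Λ = ∫_0^∞ φ < ∞, then for every n ≥ 1 and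
0 ≤ s ≤ t, ∫_0^t √u (φ^{*n}(t−u) − φ^{*n}(s−u)) du ≤ 2 Λ^n √(t−s). -/
theorem stmt14 (φ : ℝ → ℝ)
    (hφmeas : Measurable φ) (hφnn : ∀ u, 0 ≤ φ u) (hφ0 : ∀ u < (0:ℝ), φ u = 0)
    (hΛpos : 0 < ∫ u in Set.Ioi (0:ℝ), φ u)
    (hΛint : IntegrableOn φ (Set.Ioi 0)) :
    ∀ n : ℕ, 1 ≤ n → ∀ s t : ℝ, 0 ≤ s → s ≤ t →
      ∫ u in Set.Ioc (0:ℝ) t, Real.sqrt u * (convIter φ n (t - u) - convIter φ n (s - u))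
        ≤ 2 * (∫ u in Set.Ioi (0:ℝ), φ u) ^ n * Real.sqrt (t - s) := by
  intro n hn s t hs hst
  have hφInt : Integrable φ := integrable_of_neg_zero φ hφ0 hΛint
  have hφeq : ∫ u, φ u = ∫ u in Set.Ioi (0:ℝ), φ u := integral_eq_of_neg_zero φ hφ0
  obtain ⟨hψm, hψnn, hψ0, hψint, hψval⟩ := convIter_props φ hφmeas hφnn hφ0 hφInt n hn
  set ψ := convIter φ n with hψ
  set Λ : ℝ := ∫ u in Set.Ioi (0:ℝ), φ u with hΛ
  have ht : (0:ℝ) ≤ t := hs.trans hst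
  have hts : (0:ℝ) ≤ t - s := by linarith
  -- interval integrability helpers
  have hψII : ∀ a b : ℝ, IntervalIntegrable ψ volume a b := fun a b => hψint.intervalIntegrable
  have hψtII : ∀ a b : ℝ, IntervalIntegrable (fun u => ψ (t - u)) volume a b :=
    fun a b => ((integrable_comp_sub_left ψ t).2 hψint).intervalIntegrable
  have hψsII : ∀ a b : ℝ, IntervalIntegrable (fun u => ψ (s - u)) volume a b :=
    fun a b => ((integrable_comp_sub_left ψ s).2 hψint).intervalIntegrable
  have csqrt : Continuous (fun u : ℝ => Real.sqrt u) := Real.continuous_sqrt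
  have int1 : IntervalIntegrable (fun u => Real.sqrt u * ψ (t - u)) volume 0 t :=
    (hψtII 0 t).continuousOn_mul csqrt.continuousOn
  have int2 : IntervalIntegrable (fun u => Real.sqrt u * ψ (s - u)) volume 0 t :=
    (hψsII 0 t).continuousOn_mul csqrt.continuousOn
  have int2a : IntervalIntegrable (fun u => Real.sqrt u * ψ (s - u)) volume 0 s :=
    (hψsII 0 s).continuousOn_mul csqrt.continuousOn
  have int2b : IntervalIntegrable (fun u => Real.sqrt u * ψ (s - u)) volume s t :=
    (hψsII s t).continuousOn_mul csqrt.continuousOn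
  have cg : Continuous (fun u : ℝ => Real.sqrt (t - u)) :=
    csqrt.comp (continuous_sub_left t)
  have ch : Continuous (fun u : ℝ => Real.sqrt (s - u)) :=
    csqrt.comp (continuous_sub_left s)
  have g01 : IntervalIntegrable (fun u => Real.sqrt (t - u) * ψ u) volume 0 s :=
    (hψII 0 s).continuousOn_mul cg.continuousOn
  have g12 : IntervalIntegrable (fun u => Real.sqrt (t - u) * ψ u) volume s t :=
    (hψII s t).continuousOn_mul cg.continuousOn
  have h01 : IntervalIntegrable (fun u => Real.sqrt (s - u) * ψ u) volume 0 s :=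
    (hψII 0 s).continuousOn_mul ch.continuousOn
  have c01 : IntervalIntegrable (fun u => Real.sqrt (t - s) * ψ u) volume 0 s :=
    (hψII 0 s).const_mul _
  have c12 : IntervalIntegrable (fun u => Real.sqrt (t - s) * ψ u) volume s t :=
    (hψII s t).const_mul _
  -- substitution identities
  have hA : (∫ u in (0:ℝ)..t, Real.sqrt u * ψ (t - u))
      = ∫ u in (0:ℝ)..t, Real.sqrt (t - u) * ψ u := by
    have := intervalIntegral.integral_comp_sub_left
      (a := 0) (b := t) (fun u => Real.sqrt (t - u) * ψ u) t
    simpa [sub_sub_cancel] using this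
  have hB : (∫ u in (0:ℝ)..s, Real.sqrt u * ψ (s - u))
      = ∫ u in (0:ℝ)..s, Real.sqrt (s - u) * ψ u := by
    have := intervalIntegral.integral_comp_sub_left
      (a := 0) (b := s) (fun u => Real.sqrt (s - u) * ψ u) s
    simpa [sub_sub_cancel] using this
  have hB0 : (∫ u in s..t, Real.sqrt u * ψ (s - u)) = 0 := by
    rw [intervalIntegral.integral_of_le hst]
    rw [setIntegral_congr_fun measurableSet_Ioc
      (g := fun _ => (0:ℝ)) (fun u hu => by
        rw [hψ0 (s - u) (by simp only [Set.mem_Ioc] at hu; linarith), mul_zero])]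
    simp
  have hψboundt : (∫ u in (0:ℝ)..t, ψ u) ≤ Λ ^ n := by
    rw [intervalIntegral.integral_of_le ht, ← hφeq, ← hψval]
    exact setIntegral_le_integral hψint (Filter.Eventually.of_forall hψnn)
  have key : (∫ u in Set.Ioc (0:ℝ) t, Real.sqrt u * (ψ (t - u) - ψ (s - u)))
      ≤ Real.sqrt (t - s) * ∫ u in (0:ℝ)..t, ψ u := by
    calc ∫ u in Set.Ioc (0:ℝ) t, Real.sqrt u * (ψ (t - u) - ψ (s - u))
        = ∫ u in (0:ℝ)..t, (Real.sqrt u * ψ (t - u) - Real.sqrt u * ψ (s - u)) := by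
          rw [intervalIntegral.integral_of_le ht]
          apply setIntegral_congr_fun measurableSet_Ioc
          intro u _; ring
      _ = (∫ u in (0:ℝ)..t, Real.sqrt u * ψ (t - u))
            - ∫ u in (0:ℝ)..t, Real.sqrt u * ψ (s - u) :=
          intervalIntegral.integral_sub int1 int2
      _ = (∫ u in (0:ℝ)..t, Real.sqrt (t - u) * ψ u)
            - ∫ u in (0:ℝ)..s, Real.sqrt (s - u) * ψ u := by
          rw [hA, ← intervalIntegral.integral_add_adjacent_intervals int2a int2b,
            hB0, add_zero, hB]
      _ = ((∫ u in (0:ℝ)..s, Real.sqrt (t - u) * ψ u)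
            + ∫ u in s..t, Real.sqrt (t - u) * ψ u)
            - ∫ u in (0:ℝ)..s, Real.sqrt (s - u) * ψ u := by
          rw [intervalIntegral.integral_add_adjacent_intervals g01 g12]
      _ = (∫ u in (0:ℝ)..s, (Real.sqrt (t - u) - Real.sqrt (s - u)) * ψ u)
            + ∫ u in s..t, Real.sqrt (t - u) * ψ u := by
          rw [show (fun u => (Real.sqrt (t - u) - Real.sqrt (s - u)) * ψ u)
            = fun u => Real.sqrt (t - u) * ψ u - Real.sqrt (s - u) * ψ u from
            funext fun u => by ring]
          rw [intervalIntegral.integral_sub g01 h01]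
          ring
      _ ≤ (∫ u in (0:ℝ)..s, Real.sqrt (t - s) * ψ u)
            + ∫ u in s..t, Real.sqrt (t - s) * ψ u := by
          apply add_le_add
          · apply intervalIntegral.integral_mono_on hs
              ((hψII 0 s).continuousOn_mul ((cg.sub ch).continuousOn)) c01
            intro u hu
            simp only [Set.mem_Icc] at hu
            apply mul_le_mul_of_nonneg_right _ (hψnn u)
            have := sqrt_sub_sqrt_le (t - u) (s - u) (by linarith) (by linarith)
            calc Real.sqrt (t - u) - Real.sqrt (s - u)
                ≤ Real.sqrt ((t - u) - (s - u)) := this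
              _ = Real.sqrt (t - s) := by ring_nf
          · apply intervalIntegral.integral_mono_on hst g12 c12
            intro u hu
            simp only [Set.mem_Icc] at hu
            exact mul_le_mul_of_nonneg_right
              (Real.sqrt_le_sqrt (by linarith)) (hψnn u)
      _ = Real.sqrt (t - s) * ((∫ u in (0:ℝ)..s, ψ u) + ∫ u in s..t, ψ u) := by
          rw [intervalIntegral.integral_const_mul, intervalIntegral.integral_const_mul]
          ring
      _ = Real.sqrt (t - s) * ∫ u in (0:ℝ)..t, ψ u := by
          rw [intervalIntegral.integral_add_adjacent_intervals (hψII 0 s) (hψII s t)]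
  have hΛn : (0:ℝ) < Λ ^ n := pow_pos hΛpos n
  have hsq : (0:ℝ) ≤ Real.sqrt (t - s) := Real.sqrt_nonneg _
  calc ∫ u in Set.Ioc (0:ℝ) t, Real.sqrt u * (ψ (t - u) - ψ (s - u))
      ≤ Real.sqrt (t - s) * ∫ u in (0:ℝ)..t, ψ u := key
    _ ≤ Real.sqrt (t - s) * Λ ^ n := mul_le_mul_of_nonneg_left hψboundt hsq
    _ ≤ 2 * Λ ^ n * Real.sqrt (t - s) := by nlinarith
end

section
/- Let Ψ⁽³⁾(u,v,w) = u²(1−√(u/w))² / (v + u²(1−√(u/w))²) on the domain D = {(u,v,w) : w > u > 0, v > 0}, and let C = (μ/(1−Λp), (μΛ)²p(1−p)/(1−Λp)², μ/(1−Λp)³) with μ > 0, Λ > 0, p ∈ (0,1), Λp < 1. Then ∂Ψ⁽³⁾/∂v (C) = −(1−Λp)²/(μΛ)² and ∂Ψ⁽³⁾/∂w (C) = (1−Λp)⁴(1−p)/(μΛ). -/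
/-!
Ψ⁽³⁾ has the form N/(v + N) with N(u, w) = u²(1 − √(u/w))² independent of v, so
∂Ψ⁽³⁾/∂v = −N/(v + N)² and ∂Ψ⁽³⁾/∂w = v·∂N/∂w/(v + N)². At C one has √(u/w) = 1 − Λp,
N = (μΛp)²/(1 − Λp)² and v + N = (μΛ)²p/(1 − Λp)², and both formulas simplify to the claim.
-/

noncomputable def Psi3 (u v w : ℝ) : ℝ :=
  u ^ 2 * (1 - Real.sqrt (u / w)) ^ 2 / (v + u ^ 2 * (1 - Real.sqrt (u / w)) ^ 2)

open Real

noncomputable def Psi3Num (u w : ℝ) : ℝ := u ^ 2 * (1 - √(u / w)) ^ 2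

theorem hasDerivAt_const_div_add_const {c v : ℝ} (h : v + c ≠ 0) :
    HasDerivAt (fun v => c / (v + c)) (-c / (v + c) ^ 2) v := by
  refine ((hasDerivAt_const v c).div ((hasDerivAt_id' v).add_const c) h).congr_deriv ?_
  ring

theorem HasDerivAt.div_const_add_self {f : ℝ → ℝ} {f' x : ℝ} (v : ℝ) (hf : HasDerivAt f f' x)
    (h : v + f x ≠ 0) : HasDerivAt (fun y => f y / (v + f y)) (v * f' / (v + f x) ^ 2) x := by
  refine (hf.div (hf.const_add v) h).congr_deriv ?_
  ring

theorem hasDerivAt_sqrt_const_div {u w : ℝ} (h : 0 < u / w) :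
    HasDerivAt (fun w => √(u / w)) (-√(u / w) / (2 * w)) w := by
  have hw : w ≠ 0 := by rintro rfl; simp at h
  have hsq : √(u / w) ^ 2 = u / w := sq_sqrt h.le
  refine ((hasDerivAt_sqrt h.ne').comp w ((hasDerivAt_inv hw).const_mul u)).congr_deriv ?_
  field_simp
  rw [hsq]
  field_simp

theorem hasDerivAt_Psi3Num {u w : ℝ} (h : 0 < u / w) :
    HasDerivAt (Psi3Num u) (u ^ 2 * (1 - √(u / w)) * √(u / w) / w) w := by
  have hw : w ≠ 0 := by rintro rfl; simp at h
  refine ((((hasDerivAt_sqrt_const_div h).const_sub 1).pow 2).const_mul (u ^ 2)).congr_deriv ?_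
  field_simp
  ring

theorem hasDerivAt_Psi3_in_v {u v w : ℝ} (h : v + Psi3Num u w ≠ 0) :
    HasDerivAt (fun v => Psi3 u v w) (-Psi3Num u w / (v + Psi3Num u w) ^ 2) v :=
  hasDerivAt_const_div_add_const h

theorem hasDerivAt_Psi3_in_w {u v w : ℝ} (h : 0 < u / w) (hv : v + Psi3Num u w ≠ 0) :
    HasDerivAt (fun w => Psi3 u v w)
      (v * (u ^ 2 * (1 - √(u / w)) * √(u / w) / w) / (v + Psi3Num u w) ^ 2) w :=
  (hasDerivAt_Psi3Num h).div_const_add_self v hv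

theorem sqrt_div_div_pow_three {μ a : ℝ} (hμ : μ ≠ 0) (ha : 0 < a) :
    √((μ / a) / (μ / a ^ 3)) = a := by
  rw [show (μ / a) / (μ / a ^ 3) = a ^ 2 by field_simp, sqrt_sq ha.le]

theorem stmt18_general (μ Λ p : ℝ) (hμ : 0 < μ) (hΛ : 0 < Λ) (hp : 0 < p)
    (hΛp : Λ * p < 1) :
    deriv (fun v => Psi3 (μ / (1 - Λ * p)) v (μ / (1 - Λ * p) ^ 3))
        ((μ * Λ) ^ 2 * p * (1 - p) / (1 - Λ * p) ^ 2)
      = -(1 - Λ * p) ^ 2 / (μ * Λ) ^ 2 ∧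
    deriv (fun w => Psi3 (μ / (1 - Λ * p)) ((μ * Λ) ^ 2 * p * (1 - p) / (1 - Λ * p) ^ 2) w)
        (μ / (1 - Λ * p) ^ 3)
      = (1 - Λ * p) ^ 4 * (1 - p) / (μ * Λ) := by
  have ha : 0 < 1 - Λ * p := by linarith
  have hs := sqrt_div_div_pow_three hμ.ne' ha
  have hNum : Psi3Num (μ / (1 - Λ * p)) (μ / (1 - Λ * p) ^ 3)
      = (μ * Λ * p) ^ 2 / (1 - Λ * p) ^ 2 := by
    rw [Psi3Num, hs]
    field_simp
    ring
  have hden : (μ * Λ) ^ 2 * p * (1 - p) / (1 - Λ * p) ^ 2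
      + Psi3Num (μ / (1 - Λ * p)) (μ / (1 - Λ * p) ^ 3) = (μ * Λ) ^ 2 * p / (1 - Λ * p) ^ 2 := by
    rw [hNum]
    field_simp
    ring
  have hden0 : (μ * Λ) ^ 2 * p * (1 - p) / (1 - Λ * p) ^ 2
      + Psi3Num (μ / (1 - Λ * p)) (μ / (1 - Λ * p) ^ 3) ≠ 0 := by
    rw [hden]
    positivity
  have hratio : 0 < (μ / (1 - Λ * p)) / (μ / (1 - Λ * p) ^ 3) := by positivity
  constructor
  · rw [(hasDerivAt_Psi3_in_v hden0).deriv, hden, hNum]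
    field_simp
  · rw [(hasDerivAt_Psi3_in_w hratio hden0).deriv, hden, hs]
    field_simp
    ring

/-- At the point C = (μ/(1−Λp), (μΛ)²p(1−p)/(1−Λp)², μ/(1−Λp)³), the partial
derivatives of Ψ⁽³⁾ satisfy ∂Ψ⁽³⁾/∂v (C) = −(1−Λp)²/(μΛ)² and
∂Ψ⁽³⁾/∂w (C) = (1−Λp)⁴(1−p)/(μΛ). -/
theorem stmt18 (μ Λ p : ℝ) (hμ : 0 < μ) (hΛ : 0 < Λ) (hp : 0 < p) (hp1 : p < 1)
    (hΛp : Λ * p < 1) :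
    deriv (fun v => Psi3 (μ / (1 - Λ * p)) v (μ / (1 - Λ * p) ^ 3))
        ((μ * Λ) ^ 2 * p * (1 - p) / (1 - Λ * p) ^ 2)
      = -(1 - Λ * p) ^ 2 / (μ * Λ) ^ 2 ∧
    deriv (fun w => Psi3 (μ / (1 - Λ * p)) ((μ * Λ) ^ 2 * p * (1 - p) / (1 - Λ * p) ^ 2) w)
        (μ / (1 - Λ * p) ^ 3)
      = (1 - Λ * p) ^ 4 * (1 - p) / (μ * Λ) :=
  stmt18_general μ Λ p hμ hΛ hp hΛp
end

section
/- Let (θ_{ij})_{1≤i,j≤N} be i.i.d. Bernoulli(p) random variables. Then E[ ( Σ_{i=1}^K Σ_{j=1}^K Σ_{m=1}^N Σ_{n=1}^N (θ_{ij}−p)(θ_{jm}−p)(θ_{in}−p) )² ] ≤ C K² N², where C depends only on p. -/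
/-!
Write `X_q = θ_q - p`: the `X_q` are independent, centered and bounded by `1`. Expanding the
square, the expectation is a sum over pairs of index quadruples `(i, j, m, n)`, `(i', j', m', n')`
of `E[X_{ij} X_{jm} X_{in} X_{i'j'} X_{j'm'} X_{i'n'}]`. By independence such a term vanishes as soon
as one of the six index pairs occurs only once, and it is at most `1` in absolute value otherwise.
When every index pair occurs at least twice, the indices `m, n, i', j', m', n'` take at most two
values besides `i` and `j`; hence at most `4⁶ K² N²` terms survive.
-/

open MeasureTheory ProbabilityTheory Finset

/-- The Bernoulli(p) law on ℝ: mass p at 1 and mass 1−p at 0. -/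
noncomputable def bernoulliLaw (p : ℝ) : Measure ℝ :=
  ENNReal.ofReal p • Measure.dirac (1 : ℝ) + ENNReal.ofReal (1 - p) • Measure.dirac (0 : ℝ)

def AllValuesRepeated {κ β : Type*} (f : κ → β) : Prop := ∀ k, ∃ k', k' ≠ k ∧ f k' = f k

instance {κ β : Type*} [Fintype κ] [DecidableEq κ] [DecidableEq β] :
    DecidablePred (AllValuesRepeated : (κ → β) → Prop) :=
  fun f => inferInstanceAs (Decidable (∀ k, ∃ k', k' ≠ k ∧ f k' = f k))

lemma prod_comp_eq_prod_pow_card {ι κ M : Type*} [Fintype ι] [DecidableEq ι] [Fintype κ]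
    [CommMonoid M] (g : ι → M) (f : κ → ι) :
    ∏ k, g (f k) = ∏ q, g q ^ #{k | f k = q} := by
  rw [← prod_fiberwise univ f fun k => g (f k)]
  refine prod_congr rfl fun q _ => ?_
  rw [prod_congr rfl fun k hk => by rw [(mem_filter.1 hk).2], prod_const]

section Moments

variable {Ω ι κ : Type*} [MeasurableSpace Ω] {P : Measure Ω} [Fintype κ] {X : ι → Ω → ℝ}

lemma integral_prod_comp_eq_zero [Fintype ι] (hX : iIndepFun X P) (hXm : ∀ q, Measurable (X q))
    (hcent : ∀ q, ∫ ω, X q ω ∂P = 0) {f : κ → ι} (hf : ¬ AllValuesRepeated f) :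
    ∫ ω, ∏ k, X (f k) ω ∂P = 0 := by
  classical
  simp only [AllValuesRepeated, not_forall, not_exists, not_and] at hf
  obtain ⟨k, hk⟩ := hf
  have hfiber : #{k' | f k' = f k} = 1 := card_eq_one.2 ⟨k, by
    ext k'; simp only [mem_filter, mem_univ, true_and, mem_singleton]
    exact ⟨fun h => by_contra fun hne => hk k' hne h, fun h => h ▸ rfl⟩⟩
  have hpow := hX.comp (fun q x => x ^ #{k | f k = q}) fun q => measurable_id.pow_const _
  rw [funext fun ω => prod_comp_eq_prod_pow_card (X · ω) f]
  exact (hpow.integral_fun_prod_eq_prod_integral fun q => ((hXm q).pow_const _).aestronglyMeasurable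
    ).trans (prod_eq_zero (mem_univ (f k)) (by simp [hfiber, hcent]))

variable (hbd : ∀ q, ∀ᵐ ω ∂P, |X q ω| ≤ 1)
include hbd

lemma ae_abs_prod_comp_le_one (f : κ → ι) : ∀ᵐ ω ∂P, |∏ k, X (f k) ω| ≤ 1 := by
  filter_upwards [ae_all_iff.2 fun k => hbd (f k)] with ω hω
  rw [abs_prod]
  exact prod_le_one (fun _ _ => abs_nonneg _) fun k _ => hω k

variable [IsProbabilityMeasure P]

lemma integrable_prod_comp (hXm : ∀ q, Measurable (X q)) (f : κ → ι) :
    Integrable (fun ω => ∏ k, X (f k) ω) P :=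
  .of_bound (measurable_prod _ fun k _ => hXm (f k)).aestronglyMeasurable 1
    (ae_abs_prod_comp_le_one hbd f)

variable [Fintype ι] [DecidableEq ι] [DecidableEq κ]

lemma abs_integral_prod_comp_le (hX : iIndepFun X P) (hXm : ∀ q, Measurable (X q))
    (hcent : ∀ q, ∫ ω, X q ω ∂P = 0) (f : κ → ι) :
    |∫ ω, ∏ k, X (f k) ω ∂P| ≤ if AllValuesRepeated f then 1 else 0 := by
  split_ifs with hf
  · simpa using norm_integral_le_of_norm_le_const (C := 1) (μ := P) (f := fun ω => ∏ k, X (f k) ω)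
      (by simpa only [Real.norm_eq_abs] using ae_abs_prod_comp_le_one hbd f)
  · simp [integral_prod_comp_eq_zero hX hXm hcent hf]

lemma integral_sq_sum_prod_le_card (hX : iIndepFun X P) (hXm : ∀ q, Measurable (X q))
    (hcent : ∀ q, ∫ ω, X q ω ∂P = 0) {β : Type*} (s : Finset β) (g : β → κ → ι) :
    ∫ ω, (∑ x ∈ s, ∏ k, X (g x k) ω) ^ 2 ∂P
      ≤ #{z ∈ s ×ˢ s | AllValuesRepeated (Sum.elim (g z.1) (g z.2))} := by
  have hsq : ∀ ω, (∑ x ∈ s, ∏ k, X (g x k) ω) ^ 2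
      = ∑ z ∈ s ×ˢ s, ∏ k, X (Sum.elim (g z.1) (g z.2) k) ω := fun ω => by
    simp [sq, sum_mul_sum, sum_product, Fintype.prod_sum_type]
  simp_rw [hsq]
  rw [integral_finsetSum _ fun z _ => integrable_prod_comp hbd hXm _, ← sum_boole]
  exact sum_le_sum fun z _ =>
    (le_abs_self _).trans (abs_integral_prod_comp_le hbd hX hXm hcent _)

end Moments

section Counting

variable {α : Type*} [DecidableEq α]

def factorIndices (x : α × α × α × α) : Fin 3 → α × α :=
  ![(x.1, x.2.1), (x.2.1, x.2.2.1), (x.1, x.2.2.2)]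

lemma two_mul_card_image_sdiff_le {κ : Type*} [Fintype κ] (w : κ → α) (S : Finset α)
    (hw : ∀ k, w k ∉ S → ∃ k', k' ≠ k ∧ w k' = w k) :
    2 * #(univ.image w \ S) ≤ #{k | w k ∉ S} := by
  rw [card_eq_sum_card_fiberwise (f := w) (t := univ.image w \ S) fun k hk => by simpa using hk,
    mul_comm, ← smul_eq_mul, ← sum_const]
  refine sum_le_sum fun a ha => ?_
  obtain ⟨⟨k, -, rfl⟩, hkS⟩ : (∃ k ∈ univ, w k = a) ∧ a ∉ S := by simpa using ha
  obtain ⟨k', hne, hk'⟩ := hw k hkS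
  exact one_lt_card.2 ⟨k', by simp [hk', hkS], k, by simp [hkS], hne⟩

lemma card_sdiff_le_two_of_allValuesRepeated {i j m n i' j' m' n' : α}
    (h : AllValuesRepeated
      (Sum.elim (factorIndices (i, j, m, n)) (factorIndices (i', j', m', n')))) :
    #({m, n, i', j', m', n'} \ {i, j}) ≤ 2 := by
  have h' := fun k => h k
  simp only [ne_eq, factorIndices, Sum.exists, Sum.elim_inl, Fin.exists_fin_succ, Fin.isValue,
    Matrix.cons_val_zero, Matrix.cons_val_succ, Fin.succ_zero_eq_one, Matrix.cons_val_fin_one,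
    exists_and_right, Fin.succ_one_eq_two, IsEmpty.exists_iff, or_false, Sum.elim_inr, Sum.forall,
    Sum.inl.injEq, reduceCtorEq, not_false_eq_true, true_and, Fin.forall_fin_succ,
    not_true_eq_false, and_true, one_ne_zero, Prod.mk.injEq, Fin.reduceEq, false_or, zero_ne_one,
    IsEmpty.forall_iff, Sum.inr.injEq] at h'
  obtain ⟨⟨hij, hjm, hin⟩, hij', hjm', hin'⟩ := h'
  set S : Finset α := {i, j, i', j'}
  set w : Fin 4 → α := ![m, n, m', n']
  -- `m` (say) occurs only in the pair `(j, m)`, so it is the second entry of another pair.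
  have hw : ∀ k, w k ∉ S → ∃ k', k' ≠ k ∧ w k' = w k := by
    intro k hk
    fin_cases k <;>
      simp only [Fin.exists_fin_succ, Fin.reduceFinMk, Matrix.cons_val, Matrix.cons_val_zero,
        Matrix.cons_val_succ, Matrix.cons_val_fin_one, mem_insert, mem_singleton, S, w] at hk ⊢ <;>
      grind
  have hsub : {m, n, i', j', m', n'} \ {i, j} ⊆ ({i', j'} \ {i, j}) ∪ (univ.image w \ S) := by
    intro c
    simp only [mem_sdiff, mem_insert, mem_singleton, not_or, mem_union, mem_image, mem_univ,
      true_and, Fin.exists_fin_succ, Fin.isValue, Matrix.cons_val_zero, Matrix.cons_val_succ,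
      Matrix.cons_val_fin_one, exists_const, and_imp, w, S]
    grind
  have hfib := two_mul_card_image_sdiff_le w S hw
  refine (card_le_card hsub).trans ((card_union_le _ _).trans ?_)
  by_cases hnew : i' ∈ ({i, j} : Finset α) ∧ j' ∈ ({i, j} : Finset α)
  · have : #({i', j'} \ {i, j} : Finset α) = 0 := by
      simp only [card_eq_zero, sdiff_eq_empty_iff_subset, insert_subset_iff, singleton_subset_iff]
      exact hnew
    have : #{k | w k ∉ S} ≤ 4 := card_filter_le _ _ |>.trans (by simp)
    omega
  · simp only [mem_insert, mem_singleton] at hnew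
    -- `(i', j')` can then only be matched by `(i', n')`; and if `j' ∉ {i, j}`, the pairs through
    -- `j'` are matched inside the second triple and those through `j` inside the first.
    have hn' : (j' = i ∨ j' = j) → i' ≠ i → i' ≠ j → n' = j' := by grind
    have hj' : j' ≠ i → j' ≠ j → j' = i' ∧ j = i ∧ (m = i ∨ n = i) := by grind
    clear hij hjm hin hij' hjm' hin'
    have hone : #({i', j'} \ {i, j} : Finset α) ≤ 1 := card_le_one.2 (by
      simp only [mem_sdiff, mem_insert, mem_singleton, not_or, and_imp, forall_eq_or_imp,
        forall_eq, implies_true, true_and, and_true]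
      grind)
    obtain ⟨k, hk⟩ : ∃ k, w k ∈ S := by
      simp only [mem_insert, mem_singleton, Fin.exists_fin_succ, Fin.isValue, Matrix.cons_val_zero,
        Matrix.cons_val_succ, Matrix.cons_val_fin_one, exists_const, S, w]
      grind
    have : #{k | w k ∉ S} < 4 :=
      (card_lt_card (filter_ssubset.2 ⟨k, mem_univ _, not_not.2 hk⟩)).trans_eq (by simp)
    omega

lemma exists_subset_pair_of_card_le_two [Nonempty α] {s : Finset α} (hs : #s ≤ 2) :
    ∃ u v, s ⊆ {u, v} := by
  rcases Nat.lt_or_ge #s 2 with hs1 | hs2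
  · obtain ⟨u, hu⟩ := card_le_one_iff_subset_singleton.1 (Nat.lt_succ_iff.1 hs1)
    exact ⟨u, u, by simpa using hu⟩
  · obtain ⟨u, v, -, rfl⟩ := card_eq_two.1 (le_antisymm hs hs2)
    exact ⟨u, v, subset_rfl⟩

lemma card_filter_allValuesRepeated_le [Fintype α] (F : Finset α) :
    #{z ∈ (F ×ˢ F ×ˢ (univ : Finset (α × α))) ×ˢ (F ×ˢ F ×ˢ (univ : Finset (α × α))) |
        AllValuesRepeated (Sum.elim (factorIndices z.1) (factorIndices z.2))}
      ≤ 4096 * #F ^ 2 * Fintype.card α ^ 2 := by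
  let box : α × α × α × α → Finset ((α × α × α × α) × α × α × α × α) := fun c =>
    let T : Finset α := {c.1, c.2.1, c.2.2.1, c.2.2.2}
    ({c.1} ×ˢ {c.2.1} ×ˢ T ×ˢ T) ×ˢ (T ×ˢ T ×ˢ T ×ˢ T)
  have hcover : {z ∈ (F ×ˢ F ×ˢ (univ : Finset (α × α))) ×ˢ (F ×ˢ F ×ˢ (univ : Finset (α × α))) |
        AllValuesRepeated (Sum.elim (factorIndices z.1) (factorIndices z.2))}
      ⊆ (F ×ˢ F ×ˢ univ).biUnion box := by
    rintro ⟨⟨i, j, m, n⟩, ⟨i', j', m', n'⟩⟩ hz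
    simp only [mem_filter, mem_product, mem_univ, and_true] at hz
    have : Nonempty α := ⟨i⟩
    obtain ⟨u, v, huv⟩ := exists_subset_pair_of_card_le_two
      (card_sdiff_le_two_of_allValuesRepeated hz.2)
    refine mem_biUnion.2 ⟨(i, j, u, v), by simp [hz.1.1.1, hz.1.1.2], ?_⟩
    have hcov : ∀ c ∈ ({m, n, i', j', m', n'} : Finset α), c ∈ ({i, j, u, v} : Finset α) := by
      intro c hc
      by_cases hij : c ∈ ({i, j} : Finset α)
      · simp only [mem_insert, mem_singleton] at hij ⊢; tauto
      · have := huv (mem_sdiff.2 ⟨hc, hij⟩)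
        simp only [mem_insert, mem_singleton] at this ⊢; tauto
    simp only [box, mem_product, mem_singleton, true_and]
    exact ⟨⟨hcov m (by simp), hcov n (by simp)⟩, hcov i' (by simp), hcov j' (by simp),
      hcov m' (by simp), hcov n' (by simp)⟩
  have hbox : ∀ c, #(box c) ≤ 4096 := fun c => by
    have hT : #({c.1, c.2.1, c.2.2.1, c.2.2.2} : Finset α) ≤ 4 := card_le_four
    calc #(box c) = #({c.1, c.2.1, c.2.2.1, c.2.2.2} : Finset α) ^ 6 := by
          simp only [box, card_product, card_singleton]; ring
      _ ≤ 4 ^ 6 := by gcongr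
      _ = 4096 := by norm_num
  calc _ ≤ #((F ×ˢ F ×ˢ univ).biUnion box) := card_le_card hcover
    _ ≤ ∑ c ∈ F ×ˢ F ×ˢ univ, #(box c) := card_biUnion_le
    _ ≤ ∑ c ∈ F ×ˢ F ×ˢ (univ : Finset (α × α)), 4096 := sum_le_sum fun c _ => hbox c
    _ = 4096 * #F ^ 2 * Fintype.card α ^ 2 := by
      simp [card_product, Fintype.card_prod]; ring

end Counting

section Bernoulli

lemma bernoulliLaw_compl_zero_one (p : ℝ) : bernoulliLaw p {0, 1}ᶜ = 0 := by
  simp [bernoulliLaw]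

variable {p : ℝ}

lemma integral_bernoulliLaw (hp : p ∈ Set.Icc (0 : ℝ) 1) (f : ℝ → ℝ) :
    ∫ x, f x ∂bernoulliLaw p = p * f 1 + (1 - p) * f 0 := by
  rw [bernoulliLaw, integral_add_measure
    ((integrable_dirac (by simp)).smul_measure ENNReal.ofReal_ne_top)
    ((integrable_dirac (by simp)).smul_measure ENNReal.ofReal_ne_top),
    integral_smul_measure, integral_smul_measure, integral_dirac, integral_dirac,
    ENNReal.toReal_ofReal hp.1, ENNReal.toReal_ofReal (sub_nonneg.2 hp.2), smul_eq_mul, smul_eq_mul]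

variable {Ω : Type*} [MeasurableSpace Ω] {P : Measure Ω} {θ : Ω → ℝ}

lemma ae_abs_sub_le_one_of_map_eq_bernoulliLaw (hp : p ∈ Set.Icc (0 : ℝ) 1)
    (hθ : AEMeasurable θ P) (hlaw : P.map θ = bernoulliLaw p) :
    ∀ᵐ ω ∂P, |θ ω - p| ≤ 1 := by
  refine ae_of_ae_map (p := fun x => |x - p| ≤ 1) hθ ?_
  rw [hlaw, ae_iff]
  refine measure_mono_null (fun x hx => ?_) (bernoulliLaw_compl_zero_one p)
  rintro (rfl | rfl) <;> exact hx (abs_le.2 ⟨by linarith [hp.1, hp.2], by linarith [hp.1, hp.2]⟩)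

lemma integral_sub_eq_zero_of_map_eq_bernoulliLaw (hp : p ∈ Set.Icc (0 : ℝ) 1)
    (hθ : Measurable θ) (hlaw : P.map θ = bernoulliLaw p) :
    ∫ ω, θ ω - p ∂P = 0 := by
  rw [← integral_map (f := fun x => x - p) hθ.aemeasurable (by fun_prop), hlaw,
    integral_bernoulliLaw hp]
  ring

end Bernoulli

/-- There is C depending only on p such that for (θ_{ij}) i.i.d. Bernoulli(p) and K ≤ N,
E[(Σ_{i≤K} Σ_{j≤K} Σ_m Σ_n (θ_{ij}−p)(θ_{jm}−p)(θ_{in}−p))²] ≤ C K² N². -/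
theorem stmt19 (p : ℝ) (hp : p ∈ Set.Icc (0:ℝ) 1) :
    ∃ C > 0, ∀ (N K : ℕ), 1 ≤ K → K ≤ N →
    ∀ (Ω : Type) (_mΩ : MeasurableSpace Ω) (P : Measure Ω) (_ : IsProbabilityMeasure P)
      (θ : Fin N × Fin N → Ω → ℝ),
      (∀ ij, Measurable (θ ij)) →
      iIndepFun θ P →
      (∀ ij, P.map (θ ij) = bernoulliLaw p) →
      (∫ ω, (∑ i ∈ univ.filter (fun i : Fin N => (i : ℕ) < K),
          ∑ j ∈ univ.filter (fun j : Fin N => (j : ℕ) < K),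
          ∑ m : Fin N, ∑ n : Fin N,
            (θ (i, j) ω - p) * (θ (j, m) ω - p) * (θ (i, n) ω - p)) ^ 2 ∂P)
        ≤ C * (K : ℝ) ^ 2 * (N : ℝ) ^ 2 := by
  refine ⟨4096, by norm_num, fun N K _ _ Ω _ P _ θ hθ hindep hlaw => ?_⟩
  set F := univ.filter (fun i : Fin N => (i : ℕ) < K)
  let X : Fin N × Fin N → Ω → ℝ := fun q ω => θ q ω - p
  have hXm : ∀ q, Measurable (X q) := fun q => (hθ q).sub_const p
  have hX : iIndepFun X P := hindep.comp (fun _ x => x - p) fun _ => measurable_id.sub_const p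
  have hbd : ∀ q, ∀ᵐ ω ∂P, |X q ω| ≤ 1 := fun q =>
    ae_abs_sub_le_one_of_map_eq_bernoulliLaw hp (hθ q).aemeasurable (hlaw q)
  have hcent : ∀ q, ∫ ω, X q ω ∂P = 0 := fun q =>
    integral_sub_eq_zero_of_map_eq_bernoulliLaw hp (hθ q) (hlaw q)
  have hsum : ∀ ω, ∑ i ∈ F, ∑ j ∈ F, ∑ m : Fin N, ∑ n : Fin N,
      (θ (i, j) ω - p) * (θ (j, m) ω - p) * (θ (i, n) ω - p)
        = ∑ x ∈ F ×ˢ F ×ˢ univ, ∏ k, X (factorIndices x k) ω := fun ω => by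
    simp [sum_product, Fintype.sum_prod_type, Fin.prod_univ_three, factorIndices, X]
  have hF : #F ≤ K := by simp [F, Fin.card_filter_val_lt]
  calc _ = ∫ ω, (∑ x ∈ F ×ˢ F ×ˢ univ, ∏ k, X (factorIndices x k) ω) ^ 2 ∂P := by
        simp_rw [hsum]
    _ ≤ #{z ∈ (F ×ˢ F ×ˢ univ) ×ˢ (F ×ˢ F ×ˢ univ) |
          AllValuesRepeated (Sum.elim (factorIndices z.1) (factorIndices z.2))} :=
        integral_sq_sum_prod_le_card hbd hX hXm hcent _ factorIndices
    _ ≤ 4096 * (#F : ℝ) ^ 2 * (N : ℝ) ^ 2 := by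
        exact_mod_cast (card_filter_allValuesRepeated_le F).trans_eq (by simp)
    _ ≤ 4096 * (K : ℝ) ^ 2 * (N : ℝ) ^ 2 := by gcongr
end
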